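/- arXiv:1803.10953 — 4 statements merged into one kernel-verified Lean document; each statement's English description precedes it below -/
import Mathlib

section
/- For every n ≥ 1, the axiom K_n: □p₀ ∧ □p₁ ∧ … ∧ □p_n → □⋁_{0≤i<j≤n}(p_i ∧ p_j) is valid on every n-model under the diagonal semantics; that is, for all WAML formulas φ₀,…,φ_n, every n-model M, and every world w of M, if M,w ⊨ □φ_i for all i ∈ [0,n], then M,w ⊨ □⋁_{0≤i<j≤n}(φ_i ∧ φ_j). -/
namespace WAML

/-- The language of WAML: atoms, negation, conjunction, and the (diagonal) box. -/
inductive Formula : Type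
  | atom : ℕ → Formula
  | neg : Formula → Formula
  | and : Formula → Formula → Formula
  | box : Formula → Formula

namespace Formula

def imp (φ ψ : Formula) : Formula := neg (and φ (neg ψ))
def or (φ ψ : Formula) : Formula := neg (and (neg φ) (neg ψ))
def dia (φ : Formula) : Formula := neg (box (neg φ))
def bot : Formula := and (atom 0) (neg (atom 0))

/-- The set of propositional letters occurring in a formula. -/
def letters : Formula → Set ℕ
  | atom p => {p}
  | neg φ => letters φ
  | and φ ψ => letters φ ∪ letters ψ
  | box φ => letters φ

end Formula

/-- Conjunction of a list of formulas. -/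
def conjList : List Formula → Formula
  | [] => Formula.neg Formula.bot
  | [φ] => φ
  | φ :: ψ :: rest => Formula.and φ (conjList (ψ :: rest))

/-- Disjunction of a list of formulas. -/
def disjList : List Formula → Formula
  | [] => Formula.bot
  | [φ] => φ
  | φ :: ψ :: rest => Formula.or φ (disjList (ψ :: rest))

/-- ⋁_{0 ≤ i < j ≤ n} (φ_i ∧ φ_j) -/
def pairDisj (n : ℕ) (φ : Fin (n+1) → Formula) : Formula :=
  disjList (((List.finRange (n+1)).product (List.finRange (n+1))).filterMap
    (fun p => if p.1 < p.2 then some (Formula.and (φ p.1) (φ p.2)) else none))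

/-- The axiom (scheme) K_n : □φ₀ ∧ ⋯ ∧ □φ_n → □⋁_{0 ≤ i < j ≤ n} (φ_i ∧ φ_j). -/
def KnAxiom (n : ℕ) (φ : Fin (n+1) → Formula) : Formula :=
  Formula.imp (conjList ((List.finRange (n+1)).map (fun i => Formula.box (φ i))))
    (Formula.box (pairDisj n φ))

/-- A propositional tautology (including all substitution instances): a formula true under
every valuation of formulas respecting ¬ and ∧. -/
def Tautology (φ : Formula) : Prop :=
  ∀ v : Formula → Prop,
    (∀ ψ, v (Formula.neg ψ) ↔ ¬ v ψ) →
    (∀ ψ χ, v (Formula.and ψ χ) ↔ v ψ ∧ v χ) →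
    v φ

/-- The proof system 𝕂_n: propositional tautologies, K_n, modus ponens, necessitation, RM. -/
inductive KProof (n : ℕ) : Formula → Prop
  | taut {φ} : Tautology φ → KProof n φ
  | kn (φ : Fin (n+1) → Formula) : KProof n (KnAxiom n φ)
  | mp {φ ψ} : KProof n (Formula.imp φ ψ) → KProof n φ → KProof n ψ
  | nec {φ} : KProof n φ → KProof n (Formula.box φ)
  | rm {φ ψ} : KProof n (Formula.imp φ ψ) →
      KProof n (Formula.imp (Formula.box φ) (Formula.box ψ))

/-- An n-model: a nonempty set of worlds, an (n+1)-ary relation, a valuation. -/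
structure NModel (n : ℕ) where
  World : Type
  nonempty : Nonempty World
  R : World → (Fin n → World) → Prop
  V : World → ℕ → Prop

/-- Diagonal semantics. -/
def Sat {n : ℕ} (M : NModel n) : M.World → Formula → Prop
  | w, .atom p => M.V w p
  | w, .neg φ => ¬ Sat M w φ
  | w, .and φ ψ => Sat M w φ ∧ Sat M w ψ
  | w, .box φ => ∀ v : Fin n → M.World, M.R w v → ∃ i, Sat M (v i) φ

/-- wa^n-bisimulation between two n-models. -/
def IsBisim {n : ℕ} (M M' : NModel n) (Z : M.World → M'.World → Prop) : Prop :=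
  (∃ w w', Z w w') ∧
  (∀ w w', Z w w' → ∀ p, M.V w p ↔ M'.V w' p) ∧
  (∀ w w' (v : Fin n → M.World), Z w w' → M.R w v →
    ∃ v' : Fin n → M'.World, M'.R w' v' ∧ ∀ j, ∃ i, Z (v i) (v' j)) ∧
  (∀ w w' (v' : Fin n → M'.World), Z w w' → M'.R w' v' →
    ∃ v : Fin n → M.World, M.R w v ∧ ∀ i, ∃ j, Z (v i) (v' j))

/-- wa^n-bisimilarity of pointed n-models. -/
def Bisimilar {n : ℕ} (M M' : NModel n) (w : M.World) (w' : M'.World) : Prop :=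
  ∃ Z, IsBisim M M' Z ∧ Z w w'

/-- Image-finiteness: each world has finitely many successor n-tuples. -/
def ImageFinite {n : ℕ} (M : NModel n) : Prop :=
  ∀ w : M.World, {v : Fin n → M.World | M.R w v}.Finite

/-- First-order correspondence language L¹_n: formulas with free variables among Fin k
(de Bruijn style, `all` binds the last variable). -/
inductive FO (n : ℕ) : ℕ → Type
  | pred {k} : ℕ → Fin k → FO n k
  | rel {k} : (Fin (n+1) → Fin k) → FO n k
  | eq {k} : Fin k → Fin k → FO n k
  | fal {k} : FO n k
  | not {k} : FO n k → FO n k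
  | and {k} : FO n k → FO n k → FO n k
  | or {k} : FO n k → FO n k → FO n k
  | imp {k} : FO n k → FO n k → FO n k
  | all {k} : FO n (k+1) → FO n k

/-- Realization of first-order formulas in an n-model (seen as an L¹_n-structure). -/
def FO.Realize {n : ℕ} (M : NModel n) : ∀ {k}, FO n k → (Fin k → M.World) → Prop
  | _, .pred p x, a => M.V (a x) p
  | _, .rel ts, a => M.R (a (ts 0)) (fun i => a (ts i.succ))
  | _, .eq x y, a => a x = a y
  | _, .fal, _ => False
  | _, .not φ, a => ¬ FO.Realize M φ a
  | _, .and φ ψ, a => FO.Realize M φ a ∧ FO.Realize M ψ a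
  | _, .or φ ψ, a => FO.Realize M φ a ∨ FO.Realize M ψ a
  | _, .imp φ ψ, a => FO.Realize M φ a → FO.Realize M ψ a
  | _, .all φ, a => ∀ x, FO.Realize M φ (Fin.snoc a x)

/-- Quantifier rank. -/
def FO.qr {n : ℕ} : ∀ {k}, FO n k → ℕ
  | _, .pred _ _ => 0
  | _, .rel _ => 0
  | _, .eq _ _ => 0
  | _, .fal => 0
  | _, .not φ => φ.qr
  | _, .and φ ψ => max φ.qr ψ.qr
  | _, .or φ ψ => max φ.qr ψ.qr
  | _, .imp φ ψ => max φ.qr ψ.qr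
  | _, .all φ => φ.qr + 1

/-- Renaming of free variables. -/
def FO.rename {n : ℕ} : ∀ {k k'}, (Fin k → Fin k') → FO n k → FO n k'
  | _, _, f, .pred p x => .pred p (f x)
  | _, _, f, .rel ts => .rel (fun i => f (ts i))
  | _, _, f, .eq x y => .eq (f x) (f y)
  | _, _, _, .fal => .fal
  | _, _, f, .not φ => .not (φ.rename f)
  | _, _, f, .and φ ψ => .and (φ.rename f) (ψ.rename f)
  | _, _, f, .or φ ψ => .or (φ.rename f) (ψ.rename f)
  | _, _, f, .imp φ ψ => .imp (φ.rename f) (ψ.rename f)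
  | _, _, f, .all φ =>
      .all (φ.rename (fun j => Fin.lastCases (Fin.last _) (fun a => (f a).castSucc) j))

/-- A block of m universal quantifiers (binding the last m variables). -/
def FO.alls {n k : ℕ} : ∀ (m : ℕ), FO n (k + m) → FO n k
  | 0, φ => φ
  | m+1, φ => FO.alls m φ.all

/-- Disjunction of a list of first-order formulas. -/
def FO.disjList {n k : ℕ} : List (FO n k) → FO n k
  | [] => .fal
  | [φ] => φ
  | φ :: ψ :: rest => .or φ (FO.disjList (ψ :: rest))

/-- The standard translation ST_x (with x the unique free variable). -/
def ST (n : ℕ) : Formula → FO n 1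
  | .atom p => .pred p 0
  | .neg φ => .not (ST n φ)
  | .and φ ψ => .and (ST n φ) (ST n ψ)
  | .box φ =>
      let ψ := ST n φ
      FO.alls n (FO.imp
        (.rel (Fin.cases (Fin.castAdd n (0 : Fin 1)) (fun i => Fin.natAdd 1 i)))
        (FO.disjList ((List.finRange n).map
          (fun i => ψ.rename (fun _ => Fin.natAdd 1 i)))))

/-- α(x) (one free variable) is invariant under wa^n-bisimulation. -/
def BisimInvariant (n : ℕ) (α : FO n 1) : Prop :=
  ∀ (M N : NModel n) (Z : M.World → N.World → Prop) (w : M.World) (v : N.World),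
    IsBisim M N Z → Z w v →
    (FO.Realize M α (fun _ => w) ↔ FO.Realize N α (fun _ => v))

/-- α(x) is invariant under wa^n-bisimulation between finite n-models. -/
def BisimInvariantFin (n : ℕ) (α : FO n 1) : Prop :=
  ∀ (M N : NModel n) (Z : M.World → N.World → Prop) (w : M.World) (v : N.World),
    Finite M.World → Finite N.World → IsBisim M N Z → Z w v →
    (FO.Realize M α (fun _ => w) ↔ FO.Realize N α (fun _ => v))

/-- Admissible sequences for the unraveling of M around w. The first entry is
((w,…,w), 1) (index 0 in 0-based counting) and consecutive entries are related by R. -/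
def GoodSeq {n : ℕ} [NeZero n] (M : NModel n) (w : M.World)
    (s : List ((Fin n → M.World) × Fin n)) : Prop :=
  (∃ rest, s = ((fun _ => w), (0 : Fin n)) :: rest) ∧
  List.Chain' (fun a b => M.R (a.1 a.2) b.1) s

/-- The world of M corresponding to a sequence: v⃗_m[i_m] (and w for the empty list). -/
def rmap {n : ℕ} (M : NModel n) (w : M.World)
    (s : List ((Fin n → M.World) × Fin n)) : M.World :=
  match s.getLast? with
  | some a => a.1 a.2
  | none => w

/-- The unraveling M_w of M around w. -/
def Unravel {n : ℕ} [NeZero n] (M : NModel n) (w : M.World) : NModel n where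
  World := { s : List ((Fin n → M.World) × Fin n) // GoodSeq M w s }
  nonempty := ⟨⟨[((fun _ => w), 0)], ⟨⟨[], rfl⟩, List.isChain_singleton _⟩⟩⟩
  R := fun s₀ t =>
    M.R (rmap M w s₀.val) (fun i => rmap M w (t i).val) ∧
    ∀ i, ∃ a, (t i).val = s₀.val ++ [a]
  V := fun s p => M.V (rmap M w s.val) p

/-- The root ⟨((w,…,w),1)⟩ of the unraveling. -/
def unravelRoot {n : ℕ} [NeZero n] (M : NModel n) (w : M.World) :
    (Unravel M w).World :=
  ⟨[((fun _ => w), 0)], ⟨⟨[], rfl⟩, List.isChain_singleton _⟩⟩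

/-- The bounded unraveling M_w|_l : the submodel of M_w of worlds of level at most l. -/
def UnravelB {n : ℕ} [NeZero n] (M : NModel n) (w : M.World) (l : ℕ) : NModel n where
  World := { s : List ((Fin n → M.World) × Fin n) // GoodSeq M w s ∧ s.length ≤ l + 1 }
  nonempty := ⟨⟨[((fun _ => w), 0)], ⟨⟨⟨[], rfl⟩, List.isChain_singleton _⟩, by simp⟩⟩⟩
  R := fun s₀ t =>
    M.R (rmap M w s₀.val) (fun i => rmap M w (t i).val) ∧
    ∀ i, ∃ a, (t i).val = s₀.val ++ [a]
  V := fun s p => M.V (rmap M w s.val) p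

/-- The root of the bounded unraveling. -/
def unravelBRoot {n : ℕ} [NeZero n] (M : NModel n) (w : M.World) (l : ℕ) :
    (UnravelB M w l).World :=
  ⟨[((fun _ => w), 0)], ⟨⟨⟨[], rfl⟩, List.isChain_singleton _⟩, by simp⟩⟩

/-- R^c x y : y is a member of some successor tuple of x. -/
def Rc {n : ℕ} (M : NModel n) (x y : M.World) : Prop :=
  ∃ v : Fin n → M.World, M.R x v ∧ ∃ i, y = v i

/-- The undirected edge relation induced by R^c. -/
def Edge {n : ℕ} (M : NModel n) (x y : M.World) : Prop := Rc M x y ∨ Rc M y x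

/-- There is an undirected R^c-path of length m from x to y. -/
def HasPath {n : ℕ} (M : NModel n) (x y : M.World) (m : ℕ) : Prop :=
  ∃ f : ℕ → M.World, f 0 = x ∧ f m = y ∧ ∀ i < m, Edge M (f i) (f (i+1))

/-- The distance between worlds, in ℕ ∪ {ω} (ω = ⊤ if there is no path). -/
noncomputable def dist {n : ℕ} (M : NModel n) (x y : M.World) : ℕ∞ :=
  sInf {c : ℕ∞ | ∃ m : ℕ, c = (m : ℕ∞) ∧ HasPath M x y m}

/-- One literal among the letters r₁,…,r_m, i.e. the atoms 2,…,m+1. -/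
def IsLit (m : ℕ) (φ : Formula) : Prop :=
  ∃ j, j < m ∧ (φ = Formula.atom (j+2) ∨ φ = Formula.neg (Formula.atom (j+2)))

/-- A conjunction of literals over the letters r₁,…,r_m. -/
inductive IsConjLits (m : ℕ) : Formula → Prop
  | lit {φ} : IsLit m φ → IsConjLits m φ
  | conj {φ ψ} : IsConjLits m φ → IsConjLits m ψ → IsConjLits m (Formula.and φ ψ)

/-- The Craig Interpolation Property for 𝕂_n. -/
def HasCIP (n : ℕ) : Prop :=
  ∀ φ ψ : Formula, KProof n (φ.imp ψ) →
    ∃ γ : Formula, γ.letters ⊆ φ.letters ∩ ψ.letters ∧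
      KProof n (φ.imp γ) ∧ KProof n (γ.imp ψ)

@[simp]
lemma sat_or {n : ℕ} (M : NModel n) (x : M.World) (φ ψ : Formula) :
    Sat M x (φ.or ψ) ↔ Sat M x φ ∨ Sat M x ψ := by
  simp only [Formula.or, Sat]
  tauto

lemma sat_disjList_of_mem {n : ℕ} (M : NModel n) (x : M.World) {ψ : Formula} :
    ∀ {L : List Formula}, ψ ∈ L → Sat M x ψ → Sat M x (disjList L)
  | [_], hmem, hψ => by rwa [List.mem_singleton.1 hmem] at hψ
  | χ :: χ' :: rest, hmem, hψ => by
      rw [disjList, sat_or]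
      rcases List.mem_cons.1 hmem with rfl | hmem
      · exact Or.inl hψ
      · exact Or.inr (sat_disjList_of_mem M x hmem hψ)

lemma sat_pairDisj_of_lt {n : ℕ} (M : NModel n) (x : M.World) (φ : Fin (n+1) → Formula)
    {i j : Fin (n+1)} (hij : i < j) (hi : Sat M x (φ i)) (hj : Sat M x (φ j)) :
    Sat M x (pairDisj n φ) := by
  refine sat_disjList_of_mem M x (ψ := (φ i).and (φ j)) ?_ ⟨hi, hj⟩
  exact List.mem_filterMap.2 ⟨(i, j), by simp [List.pair_mem_product], by simp [hij]⟩

lemma sat_pairDisj_of_ne {n : ℕ} (M : NModel n) (x : M.World) (φ : Fin (n+1) → Formula)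
    {i j : Fin (n+1)} (hij : i ≠ j) (hi : Sat M x (φ i)) (hj : Sat M x (φ j)) :
    Sat M x (pairDisj n φ) := by
  rcases hij.lt_or_gt with hlt | hgt
  · exact sat_pairDisj_of_lt M x φ hlt hi hj
  · exact sat_pairDisj_of_lt M x φ hgt hj hi

theorem Kn_valid_general (n : ℕ) (φ : Fin (n+1) → Formula)
    (M : NModel n) (w : M.World)
    (h : ∀ i : Fin (n+1), Sat M w (Formula.box (φ i))) :
    Sat M w (Formula.box (pairDisj n φ)) := by
  intro v hv
  -- Each of the n+1 boxes picks a coordinate of the n-tuple v; two of them must coincide.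
  choose f hf using fun i => h i v hv
  obtain ⟨i, j, hne, hfij⟩ := Fintype.exists_ne_map_eq_of_card_lt f (by simp)
  exact ⟨f i, sat_pairDisj_of_ne M _ φ hne (hf i) (hfij ▸ hf j)⟩

/-- K_n is valid on every n-model under the diagonal semantics. -/
theorem Kn_valid (n : ℕ) (hn : 1 ≤ n) (φ : Fin (n+1) → Formula)
    (M : NModel n) (w : M.World)
    (h : ∀ i : Fin (n+1), Sat M w (Formula.box (φ i))) :
    Sat M w (Formula.box (pairDisj n φ)) :=
  Kn_valid_general n φ M w h

end WAML
end

section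
/- For all m, n with 1 ≤ m < n: every theorem of 𝕂_n is a theorem of 𝕂_m, while the axiom K_m: □p₀ ∧ … ∧ □p_m → □⋁_{0≤i<j≤m}(p_i ∧ p_j) is not a theorem of 𝕂_n; hence 𝕂_n is strictly weaker than 𝕂_m. -/
namespace WAML

/-! Every 𝕂_n-axiom is a 𝕂_m-theorem for m ≤ n: the first m+1 boxes of K_n's antecedent give,
by K_m, the box of a sub-disjunction of K_n's consequent, and RM finishes. Conversely 𝕂_n
(n ≥ 1) is sound for diagonal n-models, and K_m fails at the root of the model whose only
successor tuple consists of n distinct worlds, each satisfying a single letter: every □pᵢ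
holds there, but no world of the tuple satisfies two distinct letters. -/

structure IsValuation (v : Formula → Prop) : Prop where
  neg : ∀ ψ, v (Formula.neg ψ) ↔ ¬ v ψ
  and : ∀ ψ χ, v (Formula.and ψ χ) ↔ v ψ ∧ v χ

theorem tautology_iff {φ : Formula} : Tautology φ ↔ ∀ v, IsValuation v → v φ :=
  ⟨fun h v hv => h v hv.neg hv.and, fun h v hneg hand => h v ⟨hneg, hand⟩⟩

namespace IsValuation

variable {v : Formula → Prop}

theorem imp (hv : IsValuation v) (φ ψ : Formula) : v (φ.imp ψ) ↔ (v φ → v ψ) := by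
  simp only [Formula.imp, hv.neg, hv.and]; tauto

theorem or (hv : IsValuation v) (φ ψ : Formula) : v (φ.or ψ) ↔ v φ ∨ v ψ := by
  simp only [Formula.or, hv.neg, hv.and]; tauto

theorem not_bot (hv : IsValuation v) : ¬ v Formula.bot := by
  simp only [Formula.bot, hv.neg, hv.and]; tauto

theorem conjList (hv : IsValuation v) :
    ∀ L : List Formula, v (WAML.conjList L) ↔ ∀ ψ ∈ L, v ψ
  | [] => by simpa [WAML.conjList, hv.neg] using hv.not_bot
  | [φ] => by simp [WAML.conjList]
  | φ :: ψ :: L => by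
    rw [WAML.conjList, hv.and, IsValuation.conjList hv (ψ :: L)]
    exact List.forall_mem_cons.symm

theorem disjList (hv : IsValuation v) :
    ∀ L : List Formula, v (WAML.disjList L) ↔ ∃ ψ ∈ L, v ψ
  | [] => by simpa [WAML.disjList] using hv.not_bot
  | [φ] => by simp [WAML.disjList]
  | φ :: ψ :: L => by
    rw [WAML.disjList, hv.or, IsValuation.disjList hv (ψ :: L)]
    exact (List.exists_mem_cons_iff _ _ _).symm

theorem conjList_map_finRange (hv : IsValuation v) {k : ℕ} (f : Fin k → Formula) :
    v (WAML.conjList ((List.finRange k).map f)) ↔ ∀ i, v (f i) := by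
  simp [hv.conjList]

theorem pairDisj (hv : IsValuation v) {k : ℕ} (φ : Fin (k + 1) → Formula) :
    v (WAML.pairDisj k φ) ↔ ∃ i j, i < j ∧ v (φ i) ∧ v (φ j) := by
  simp only [WAML.pairDisj, hv.disjList, List.mem_filterMap, List.pair_mem_product,
    List.mem_finRange, true_and, Prod.exists]
  constructor
  · rintro ⟨ψ, ⟨i, j, hψ⟩, hvψ⟩
    split_ifs at hψ with hij
    cases hψ
    exact ⟨i, j, hij, (hv.and _ _).1 hvψ⟩
  · rintro ⟨i, j, hij, hvi, hvj⟩
    exact ⟨_, ⟨i, j, if_pos hij⟩, (hv.and _ _).2 ⟨hvi, hvj⟩⟩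

end IsValuation

theorem KProof.imp_trans {n : ℕ} {a b c : Formula} (hab : KProof n (a.imp b))
    (hbc : KProof n (b.imp c)) : KProof n (a.imp c) := by
  refine (KProof.taut ?_).mp hab |>.mp hbc
  rw [tautology_iff]
  intro v hv
  simp only [hv.imp]
  tauto

theorem KProof.knAxiom_of_le {m n : ℕ} (hmn : m ≤ n) (φ : Fin (n + 1) → Formula) :
    KProof m (KnAxiom n φ) := by
  let ι : Fin (m + 1) → Fin (n + 1) := Fin.castLE (by omega)
  have boxes : Tautology ((conjList ((List.finRange (n + 1)).map fun i => (φ i).box)).imp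
      (conjList ((List.finRange (m + 1)).map fun i => (φ (ι i)).box))) := by
    rw [tautology_iff]
    intro v hv
    rw [hv.imp, hv.conjList_map_finRange, hv.conjList_map_finRange]
    exact fun h i => h (ι i)
  have pairs : Tautology ((pairDisj m (φ ∘ ι)).imp (pairDisj n φ)) := by
    rw [tautology_iff]
    intro v hv
    rw [hv.imp, hv.pairDisj, hv.pairDisj]
    rintro ⟨i, j, hij, hi, hj⟩
    exact ⟨ι i, ι j, hij, hi, hj⟩
  exact (KProof.taut boxes).imp_trans ((KProof.kn (φ ∘ ι)).imp_trans (KProof.taut pairs).rm)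

theorem KProof.of_le {m n : ℕ} (hmn : m ≤ n) {φ : Formula} (h : KProof n φ) : KProof m φ := by
  induction h with
  | taut ht => exact .taut ht
  | kn ψ => exact .knAxiom_of_le hmn ψ
  | mp _ _ ih₁ ih₂ => exact ih₁.mp ih₂
  | nec _ ih => exact ih.nec
  | rm _ ih => exact ih.rm

theorem isValuation_sat {n : ℕ} (M : NModel n) (w : M.World) : IsValuation (Sat M w) :=
  ⟨fun _ => Iff.rfl, fun _ _ => Iff.rfl⟩

theorem sat_knAxiom {n : ℕ} (φ : Fin (n + 1) → Formula) (M : NModel n) (w : M.World) :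
    Sat M w (KnAxiom n φ) := by
  rw [KnAxiom, (isValuation_sat M w).imp, (isValuation_sat M w).conjList_map_finRange]
  intro hbox v hR
  choose k hk using fun i => hbox i v hR
  -- pigeonhole: n + 1 formulas, each true somewhere among n worlds
  obtain ⟨i, j, hne, hkij⟩ := Fintype.exists_ne_map_eq_of_card_lt k (by simp)
  refine ⟨k i, (isValuation_sat M _).pairDisj φ |>.2 ?_⟩
  rcases hne.lt_or_gt with hij | hji
  · exact ⟨i, j, hij, hk i, hkij ▸ hk j⟩
  · exact ⟨j, i, hji, hkij ▸ hk j, hk i⟩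

theorem KProof.sound {n : ℕ} (hn : 0 < n) {φ : Formula} (h : KProof n φ) (M : NModel n)
    (w : M.World) : Sat M w φ := by
  induction h generalizing w with
  | taut ht => exact tautology_iff.1 ht _ (isValuation_sat M w)
  | kn ψ => exact sat_knAxiom ψ M w
  | mp _ _ ih₁ ih₂ => exact ((isValuation_sat M w).imp _ _).1 (ih₁ w) (ih₂ w)
  | nec _ ih => exact fun v _ => ⟨⟨0, hn⟩, ih (v ⟨0, hn⟩)⟩
  | rm _ ih =>
    rw [(isValuation_sat M w).imp]
    intro hbox v hR
    obtain ⟨i, hi⟩ := hbox v hR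
    exact ⟨i, ((isValuation_sat M (v i)).imp _ _).1 (ih (v i)) hi⟩

abbrev tupleModel (n : ℕ) : NModel n where
  World := Option (Fin n)
  nonempty := ⟨none⟩
  R w t := w = none ∧ t = some
  V w p := ∃ k : Fin n, w = some k ∧ k.val = p

theorem not_sat_knAxiom_tupleModel {m n : ℕ} (hmn : m < n) :
    ¬ Sat (tupleModel n) none (KnAxiom m fun i => Formula.atom i.val) := by
  rw [KnAxiom, (isValuation_sat _ _).imp, (isValuation_sat _ _).conjList_map_finRange]
  intro h
  have hbox (i : Fin (m + 1)) : Sat (tupleModel n) none (Formula.atom i.val).box := by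
    rintro _ ⟨-, rfl⟩
    exact ⟨⟨i, by omega⟩, _, rfl, rfl⟩
  obtain ⟨l, hl⟩ := h hbox some ⟨rfl, rfl⟩
  obtain ⟨i, j, hij, ⟨k, hk, hki⟩, ⟨k', hk', hkj⟩⟩ :=
    (isValuation_sat _ _).pairDisj _ |>.1 hl
  obtain rfl : k = k' := Option.some_injective _ (hk.symm.trans hk')
  exact hij.ne (Fin.ext (hki.symm.trans hkj))

theorem Kn_strictly_weaker_general (m n : ℕ) (hmn : m < n) :
    (∀ φ : Formula, KProof n φ → KProof m φ) ∧
    ¬ KProof n (KnAxiom m (fun i => Formula.atom i.val)) :=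
  ⟨fun _ h => h.of_le hmn.le,
    fun h => not_sat_knAxiom_tupleModel hmn (h.sound (by omega) (tupleModel n) none)⟩

/-- for 1 ≤ m < n, 𝕂_n is strictly weaker than 𝕂_m: every theorem of 𝕂_n
is a theorem of 𝕂_m, but the axiom K_m (on distinct atoms) is not a theorem of 𝕂_n. -/
theorem Kn_strictly_weaker (m n : ℕ) (hm : 1 ≤ m) (hmn : m < n) :
    (∀ φ : Formula, KProof n φ → KProof m φ) ∧
    ¬ KProof n (KnAxiom m (fun i => Formula.atom i.val)) :=
  Kn_strictly_weaker_general m n hmn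

end WAML
end

section
/- WAML formulas are invariant under wa^n-bisimulation: if Z is a wa^n-bisimulation between n-models M and M' and w Z w', then for every WAML formula φ, M,w ⊨ φ iff M',w' ⊨ φ. -/
namespace WAML

namespace IsBisim

variable {n : ℕ} {M M' : NModel n} {Z : M.World → M'.World → Prop}

theorem valuation_iff (hZ : IsBisim M M' Z) {w : M.World} {w' : M'.World} (h : Z w w')
    (p : ℕ) : M.V w p ↔ M'.V w' p :=
  hZ.2.1 w w' h p

theorem back (hZ : IsBisim M M' Z) {w : M.World} {w' : M'.World} (h : Z w w')
    {v' : Fin n → M'.World} (hR : M'.R w' v') :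
    ∃ v : Fin n → M.World, M.R w v ∧ ∀ i, ∃ j, Z (v i) (v' j) :=
  hZ.2.2.2 w w' v' h hR

theorem symm (hZ : IsBisim M M' Z) : IsBisim M' M (flip Z) := by
  obtain ⟨⟨w, w', h⟩, hV, hforth, hback⟩ := hZ
  exact ⟨⟨w', w, h⟩, fun w' w h p => (hV w w' h p).symm,
    fun w' w v' h hR => hback w w' v' h hR, fun w' w v h hR => hforth w w' v h hR⟩

/-- The forth clause of `Z` is the back clause of `flip Z`, so this covers both directions of the
box case. -/
theorem sat_box (hZ : IsBisim M M' Z) {w : M.World} {w' : M'.World} (h : Z w w')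
    {φ : Formula} (hφ : ∀ x x', Z x x' → Sat M x φ → Sat M' x' φ)
    (hw : Sat M w φ.box) : Sat M' w' φ.box := by
  intro v' hR'
  obtain ⟨v, hR, hcover⟩ := hZ.back h hR'
  obtain ⟨i, hi⟩ := hw v hR
  obtain ⟨j, hij⟩ := hcover i
  exact ⟨j, hφ _ _ hij hi⟩

end IsBisim

/-- WAML formulas are invariant under wa^n-bisimulation. -/
theorem bisim_invariance (n : ℕ) (M M' : NModel n) (Z : M.World → M'.World → Prop)
    (hZ : IsBisim M M' Z) (w : M.World) (w' : M'.World) (h : Z w w') (φ : Formula) :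
    Sat M w φ ↔ Sat M' w' φ := by
  induction φ generalizing M M' Z w w' with
  | atom p => exact hZ.valuation_iff h p
  | neg φ ih => exact not_congr (ih M M' Z hZ w w' h)
  | and φ ψ ihφ ihψ => exact and_congr (ihφ M M' Z hZ w w' h) (ihψ M M' Z hZ w w' h)
  | box φ ih =>
    exact ⟨hZ.sat_box h fun x x' hx => (ih M M' Z hZ x x' hx).mp,
      hZ.symm.sat_box h fun x' x hx => (ih M' M (flip Z) hZ.symm x' x hx).mp⟩

end WAML
end

section
/- The root map of the unraveling is a wa^n-bisimulation: for any n-model M = (W,R,V) and w ∈ W, the relation {(s, r(s)) : s a world of the unraveling M_w} is a wa^n-bisimulation between M_w and M; in particular the root ⟨((w,…,w),1)⟩ of M_w is wa^n-bisimilar to w in M, so they satisfy the same WAML formulas. -/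
namespace WAML

theorem sat_iff_of_isBisim {n : ℕ} {M M' : NModel n} {Z : M.World → M'.World → Prop}
    (hZ : IsBisim M M' Z) (φ : Formula) {w : M.World} {w' : M'.World} (hw : Z w w') :
    Sat M w φ ↔ Sat M' w' φ := by
  obtain ⟨-, hinv, hforth, hback⟩ := hZ
  induction φ generalizing w w' with
  | atom p => exact hinv w w' hw p
  | neg φ ih => exact not_congr (ih hw)
  | and φ ψ ihφ ihψ => exact and_congr (ihφ hw) (ihψ hw)
  | box φ ih =>
    constructor
    · intro h v' hv'
      obtain ⟨v, hv, hvv'⟩ := hback w w' v' hw hv'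
      obtain ⟨i, hi⟩ := h v hv
      obtain ⟨j, hij⟩ := hvv' i
      exact ⟨j, (ih hij).mp hi⟩
    · intro h v hv
      obtain ⟨v', hv', hvv'⟩ := hforth w w' v hw hv
      obtain ⟨j, hj⟩ := h v' hv'
      obtain ⟨i, hij⟩ := hvv' j
      exact ⟨i, (ih hij).mpr hj⟩

theorem sat_iff_of_bisimilar {n : ℕ} {M M' : NModel n} {w : M.World} {w' : M'.World}
    (h : Bisimilar M M' w w') (φ : Formula) : Sat M w φ ↔ Sat M' w' φ :=
  let ⟨_, hZ, hw⟩ := h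
  sat_iff_of_isBisim hZ φ hw

section Unravel

variable {n : ℕ} (M : NModel n) (w : M.World)

@[simp]
theorem rmap_append_singleton (s : List ((Fin n → M.World) × Fin n))
    (a : (Fin n → M.World) × Fin n) : rmap M w (s ++ [a]) = a.1 a.2 := by
  simp [rmap]

theorem rmap_of_getLast?_eq_some {s : List ((Fin n → M.World) × Fin n)} {a}
    (h : s.getLast? = some a) : rmap M w s = a.1 a.2 := by
  simp [rmap, h]

variable [NeZero n] {M w}

theorem GoodSeq.append_singleton {s : List ((Fin n → M.World) × Fin n)} (hs : GoodSeq M w s)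
    {v : Fin n → M.World} (hv : M.R (rmap M w s) v) (i : Fin n) :
    GoodSeq M w (s ++ [(v, i)]) := by
  obtain ⟨⟨rest, rfl⟩, hchain⟩ := hs
  refine ⟨⟨rest ++ [(v, i)], rfl⟩, hchain.append (List.isChain_singleton _) ?_⟩
  rintro a ha _ ⟨⟩
  rwa [← rmap_of_getLast?_eq_some M w ha]

def Unravel.child (s : (Unravel M w).World) {v : Fin n → M.World}
    (hv : M.R (rmap M w s.val) v) (i : Fin n) : (Unravel M w).World :=
  ⟨s.val ++ [(v, i)], s.prop.append_singleton hv i⟩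

@[simp]
theorem Unravel.rmap_child (s : (Unravel M w).World) {v : Fin n → M.World}
    (hv : M.R (rmap M w s.val) v) (i : Fin n) : rmap M w (Unravel.child s hv i).val = v i :=
  rmap_append_singleton M w _ _

theorem Unravel.rel_child (s : (Unravel M w).World) {v : Fin n → M.World}
    (hv : M.R (rmap M w s.val) v) : (Unravel M w).R s (Unravel.child s hv) := by
  refine ⟨?_, fun i => ⟨(v, i), rfl⟩⟩
  simpa only [Unravel.rmap_child] using hv

@[simp]
theorem rmap_unravelRoot : rmap M w (unravelRoot M w).val = w := rfl

theorem isBisim_unravel_rmap : IsBisim (Unravel M w) M (fun s u => rmap M w s.val = u) := by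
  refine ⟨⟨unravelRoot M w, w, rmap_unravelRoot⟩, ?_, ?_, ?_⟩
  · rintro s _ rfl p
    rfl
  · rintro s _ t rfl ⟨hR, -⟩
    exact ⟨fun i => rmap M w (t i).val, hR, fun j => ⟨j, rfl⟩⟩
  · rintro s _ v rfl hv
    exact ⟨Unravel.child s hv, Unravel.rel_child s hv, fun i => ⟨i, Unravel.rmap_child s hv i⟩⟩

end Unravel

/-- the root map of the unraveling is a wa^n-bisimulation between M_w and M;
in particular the root of M_w is wa^n-bisimilar to w, so they satisfy the same formulas. -/
theorem unravel_bisim (n : ℕ) [NeZero n] (M : NModel n) (w : M.World) :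
    IsBisim (Unravel M w) M (fun s u => rmap M w s.val = u) ∧
    Bisimilar (Unravel M w) M (unravelRoot M w) w ∧
    (∀ φ : Formula, Sat (Unravel M w) (unravelRoot M w) φ ↔ Sat M w φ) := by
  have hroot : Bisimilar (Unravel M w) M (unravelRoot M w) w :=
    ⟨_, isBisim_unravel_rmap, rmap_unravelRoot⟩
  exact ⟨isBisim_unravel_rmap, hroot, sat_iff_of_bisimilar hroot⟩

end WAML
end
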